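/- arXiv:2402.10383 — 2 statements merged into one kernel-verified Lean document; each statement's English description precedes it below -/
import Mathlib

section
/- Let T satisfy the sectorial-type hypotheses (ray S_ω in the S-resolvent set with ‖Q_s(T)^{-1}‖ ≤ M/|s|², ‖TQ_s(T)^{-1}‖ ≤ M/|s|). Then for all n < k < m ∈ ℕ₀, the space D(Tᵏ) belongs to K_{(k−n)/(m−n)}(D(Tⁿ), D(T^m)); i.e., there exists C_K ≥ 0 such that K(t,x) ≤ C_K·t^{(k−n)/(m−n)}·‖x‖_{D(Tᵏ)} for all t > 0 and x ∈ D(Tᵏ), where K is the K-functional of the couple D(Tⁿ), D(T^m). -/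
noncomputable section

open MulOpposite

local notation "ℍ" => Quaternion ℝ

/-- The domain `D(Tⁿ)` of the `n`-th power of an operator `T` with domain `D`:
all `x` such that `x, Tx, …, T^{n-1}x ∈ D`. -/
def domN {X : Type*} [AddCommGroup X] [Module ℍᵐᵒᵖ X]
    (T : Module.End ℍᵐᵒᵖ X) (D : Set X) (n : ℕ) : Set X :=
  {x | ∀ j < n, (T ^ j) x ∈ D}

/-- The operator `Q_s(T) = T² − 2 Re(s) T + |s|²` for a quaternion `s`. -/
def Qs {X : Type*} [AddCommGroup X] [Module ℍᵐᵒᵖ X] [Module ℝ X]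
    [SMulCommClass ℍᵐᵒᵖ ℝ X] (T : Module.End ℍᵐᵒᵖ X) (s : ℍ) : Module.End ℍᵐᵒᵖ X :=
  T ^ 2 - (2 * s.re) • T + (‖s‖ ^ 2) • 1

/-- The operator `Q_{t e^{iω}}(T) = T² − 2 t cos(ω) T + t²` associated with the point
`t e^{iω}` of the ray `S_ω` (independent of the imaginary unit `i ∈ 𝕊`). -/
def Qray {X : Type*} [AddCommGroup X] [Module ℍᵐᵒᵖ X] [Module ℝ X]
    [SMulCommClass ℍᵐᵒᵖ ℝ X] (T : Module.End ℍᵐᵒᵖ X) (ω t : ℝ) : Module.End ℍᵐᵒᵖ X :=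
  T ^ 2 - (2 * t * Real.cos ω) • T + (t ^ 2) • 1

/-- The `K`-functional of the couple `D(Tⁿ), D(T^m)` (with graph norms). -/
def Kdom {X : Type*} [NormedAddCommGroup X] [Module ℍᵐᵒᵖ X]
    (T : Module.End ℍᵐᵒᵖ X) (D : Set X) (n m : ℕ) (t : ℝ) (x : X) : ℝ :=
  sInf {r | ∃ a b, x = a + b ∧ a ∈ domN T D n ∧ b ∈ domN T D m ∧
    r = (‖a‖ + ‖(T ^ n) a‖) + t * (‖b‖ + ‖(T ^ m) b‖)}

/-!
For `τ > 0` let `F = τ² Q_τ(T)⁻¹`, with `Q_τ(T)` taken on the ray `S_ω`. The resolvent bounds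
give `‖F‖ ≤ C`, `‖T F‖ ≤ C τ`, `‖T² F‖ ≤ C τ²` and `‖(1 - F) z‖ ≤ (C/τ) ‖T z‖` on `D(T)`,
uniformly in `τ`. With `G = 1 - (1 - F)ᵏ` (a multiple of `F`, hence smoothing), every
`x ∈ D(Tᵏ)` splits as `x = (1 - F)ᵏ ∑_{l<m} Gˡ x + Gᵐ x`: the first summand has norm
`O(τ^{-(k-n)} ‖x‖_{D(Tᵏ)})` in `D(Tⁿ)`, the second lies in `D(Tᵐ)` with
`‖Tᵐ Gᵐ x‖ = O(τ^{m-k} ‖Tᵏ x‖)`. For `t < 1` the choice `τ = t^{-1/(m-n)}` balances both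
terms at `t^{(k-n)/(m-n)}`; for `t ≥ 1` the trivial splitting `x = x + 0` suffices, since the
splitting at `τ = 1` bounds `‖Tⁿ x‖` by `‖x‖_{D(Tᵏ)}`.
-/

section Domains

variable {X : Type*} [AddCommGroup X] [Module ℍᵐᵒᵖ X] (T : Module.End ℍᵐᵒᵖ X)

theorem domN_antitone (D : Set X) : Antitone (domN T D) :=
  fun _ _ hij _ hx l hl => hx l (lt_of_lt_of_le hl hij)

theorem pow_apply_mem_domN {D : Set X} {i j : ℕ} {x : X} (hx : x ∈ domN T D (i + j)) :
    (T ^ i) x ∈ domN T D j := by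
  intro l hl
  rw [← Module.End.mul_apply, ← pow_add]
  exact hx _ (by omega)

theorem mem_of_mem_domN {D : Set X} {j : ℕ} {x : X} (hx : x ∈ domN T D j) (hj : 0 < j) :
    x ∈ D := by
  simpa using hx 0 hj

theorem zero_mem_domN (D : Submodule ℍᵐᵒᵖ X) (j : ℕ) : (0 : X) ∈ domN T D j :=
  fun _ _ => by simp

def commutant (D : Submodule ℍᵐᵒᵖ X) : Subring (Module.End ℍᵐᵒᵖ X) where
  carrier := {A | ∀ z ∈ D, A z ∈ D ∧ A (T z) = T (A z)}
  one_mem' z hz := ⟨hz, rfl⟩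
  zero_mem' z _ := ⟨D.zero_mem, by simp⟩
  mul_mem' {A B} hA hB z hz := by
    obtain ⟨hBz, hBT⟩ := hB z hz
    exact ⟨(hA _ hBz).1, by simp only [Module.End.mul_apply, hBT, (hA _ hBz).2]⟩
  add_mem' {A B} hA hB z hz :=
    ⟨D.add_mem (hA z hz).1 (hB z hz).1, by simp [(hA z hz).2, (hB z hz).2]⟩
  neg_mem' {A} hA z hz := ⟨D.neg_mem (hA z hz).1, by simp [(hA z hz).2]⟩

variable {T} {D : Submodule ℍᵐᵒᵖ X} {A : Module.End ℍᵐᵒᵖ X}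

theorem pow_apply_comm_of_mem_commutant (hA : A ∈ commutant T D) {j : ℕ} {z : X}
    (hz : z ∈ domN T D j) : (T ^ j) (A z) = A ((T ^ j) z) := by
  induction j generalizing z with
  | zero => simp
  | succ j ih =>
    have hTz : T z ∈ domN T D j := pow_apply_mem_domN T (i := 1) (by rwa [add_comm])
    rw [pow_succ, Module.End.mul_apply, Module.End.mul_apply,
      ← (hA z (mem_of_mem_domN T hz j.succ_pos)).2, ih hTz]

theorem apply_mem_domN_of_mem_commutant (hA : A ∈ commutant T D) {j : ℕ} {z : X}
    (hz : z ∈ domN T D j) : A z ∈ domN T D j := fun i hi => by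
  rw [pow_apply_comm_of_mem_commutant hA (domN_antitone T D hi.le hz)]
  exact (hA _ (hz i hi)).1

theorem apply_mem_domN_add (hA : A ∈ commutant T D) {d : ℕ} (hAd : ∀ z, A z ∈ domN T D d)
    {j : ℕ} {z : X} (hz : z ∈ domN T D j) : A z ∈ domN T D (j + d) := by
  intro i hi
  rcases lt_or_ge i j with hij | hji
  · rw [pow_apply_comm_of_mem_commutant hA (domN_antitone T D hij.le hz)]
    exact (hA _ (hz i hij)).1
  · obtain ⟨l, rfl⟩ := Nat.exists_eq_add_of_le' hji
    rw [pow_add, Module.End.mul_apply, pow_apply_comm_of_mem_commutant hA hz]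
    exact hAd _ l (by omega)

end Domains

section RealScalars

variable {X : Type*} [NormedAddCommGroup X] [NormedSpace ℝ X] [Module ℍᵐᵒᵖ X]
  {T : Module.End ℍᵐᵒᵖ X} {D : Submodule ℍᵐᵒᵖ X}

/-- Both actions agree on `ℚ`, and both are continuous in the scalar (the quaternionic one
by `hnorm`), so they agree on `ℝ`. -/
theorem real_smul_eq_op_smul (hnorm : ∀ (x : X) (s : ℍ), ‖(op s) • x‖ = ‖x‖ * ‖s‖)
    (r : ℝ) (x : X) : r • x = op (r : ℍ) • x := by
  have hlip : LipschitzWith ‖x‖₊ fun r : ℝ => op (r : ℍ) • x := by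
    refine LipschitzWith.of_dist_le_mul fun r s => ?_
    rw [dist_eq_norm, dist_eq_norm, ← sub_smul, ← op_sub, ← Quaternion.coe_sub, hnorm,
      Quaternion.norm_coe, coe_nnnorm]
  refine congrFun (Rat.denseRange_cast.equalizer (continuous_id.smul continuous_const)
    hlip.continuous (funext fun q => ?_)) r
  simpa [Quaternion.coe_ratCast, op_ratCast] using map_ratCast_smul (AddMonoidHom.id X) ℝ ℍᵐᵒᵖ q x

theorem Module.End.map_real_smul (hnorm : ∀ (x : X) (s : ℍ), ‖(op s) • x‖ = ‖x‖ * ‖s‖)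
    (A : Module.End ℍᵐᵒᵖ X) (r : ℝ) (x : X) : A (r • x) = r • A x := by
  rw [real_smul_eq_op_smul hnorm, map_smul, real_smul_eq_op_smul hnorm]

theorem Submodule.real_smul_mem (hnorm : ∀ (x : X) (s : ℍ), ‖(op s) • x‖ = ‖x‖ * ‖s‖)
    (r : ℝ) {y : X} (hy : y ∈ D) : r • y ∈ D := by
  rw [real_smul_eq_op_smul hnorm]
  exact D.smul_mem _ hy

theorem real_smul_mem_domN (hnorm : ∀ (x : X) (s : ℍ), ‖(op s) • x‖ = ‖x‖ * ‖s‖) (r : ℝ)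
    {j : ℕ} {y : X} (hy : y ∈ domN T D j) : r • y ∈ domN T D j := fun i hi => by
  rw [Module.End.map_real_smul hnorm]
  exact D.real_smul_mem hnorm r (hy i hi)

end RealScalars

section Smoothing

variable {X : Type*} [NormedAddCommGroup X] [Module ℍᵐᵒᵖ X]
  {T : Module.End ℍᵐᵒᵖ X} {D : Submodule ℍᵐᵒᵖ X}

theorem norm_pow_apply_le {A : Module.End ℍᵐᵒᵖ X} {c : ℝ} (hc : 0 ≤ c)
    (hA : ∀ z, ‖A z‖ ≤ c * ‖z‖) (p : ℕ) (z : X) : ‖(A ^ p) z‖ ≤ c ^ p * ‖z‖ := by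
  induction p generalizing z with
  | zero => simp
  | succ p ih =>
    calc ‖(A ^ (p + 1)) z‖ = ‖(A ^ p) (A z)‖ := by rw [pow_succ, Module.End.mul_apply]
      _ ≤ c ^ p * (c * ‖z‖) := (ih _).trans (by gcongr; exact hA z)
      _ = c ^ (p + 1) * ‖z‖ := by ring

theorem norm_geom_sum_apply_le {A : Module.End ℍᵐᵒᵖ X} {c : ℝ} (hc : 0 ≤ c)
    (hA : ∀ z, ‖A z‖ ≤ c * ‖z‖) (p : ℕ) (z : X) :
    ‖(∑ i ∈ Finset.range p, A ^ i) z‖ ≤ (∑ i ∈ Finset.range p, c ^ i) * ‖z‖ := by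
  rw [LinearMap.sum_apply, Finset.sum_mul]
  exact (norm_sum_le _ _).trans (Finset.sum_le_sum fun i _ => norm_pow_apply_le hc hA i z)

theorem norm_pow_apply_le_norm_pow_T {E : Module.End ℍᵐᵒᵖ X} (hE : E ∈ commutant T D)
    {c : ℝ} (hc : 0 ≤ c) (hEc : ∀ z ∈ D, ‖E z‖ ≤ c * ‖T z‖) {p : ℕ} {z : X}
    (hz : z ∈ domN T D p) : ‖(E ^ p) z‖ ≤ c ^ p * ‖(T ^ p) z‖ := by
  induction p generalizing z with
  | zero => simp
  | succ p ih =>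
    have hzp : z ∈ domN T D p := domN_antitone T D p.le_succ hz
    calc ‖(E ^ (p + 1)) z‖ = ‖(E ^ p) (E z)‖ := by rw [pow_succ, Module.End.mul_apply]
      _ ≤ c ^ p * ‖E ((T ^ p) z)‖ := by
        rw [← pow_apply_comm_of_mem_commutant hE hzp]
        exact ih (apply_mem_domN_of_mem_commutant hE hzp)
      _ ≤ c ^ p * (c * ‖T ((T ^ p) z)‖) := by gcongr; exact hEc _ (hz p p.lt_succ_self)
      _ = c ^ (p + 1) * ‖(T ^ (p + 1)) z‖ := by
        rw [pow_succ' T, Module.End.mul_apply]; ring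

/-- The properties of `τ² Q_τ(T)⁻¹` that the argument uses. -/
structure IsSmoothing (T : Module.End ℍᵐᵒᵖ X) (D : Submodule ℍᵐᵒᵖ X) (τ C : ℝ)
    (A : Module.End ℍᵐᵒᵖ X) : Prop where
  nonneg : 0 ≤ C
  mem_commutant : A ∈ commutant T D
  apply_mem_domN_two : ∀ z, A z ∈ domN T D 2
  norm_apply_le : ∀ z, ‖A z‖ ≤ C * ‖z‖
  norm_T_apply_le : ∀ z, ‖T (A z)‖ ≤ C * τ * ‖z‖
  norm_T_T_apply_le : ∀ z, ‖T (T (A z))‖ ≤ C * τ ^ 2 * ‖z‖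

namespace IsSmoothing

variable {τ C : ℝ} {A : Module.End ℍᵐᵒᵖ X}

theorem mul_right (hA : IsSmoothing T D τ C A) (hτ : 0 ≤ τ) {B : Module.End ℍᵐᵒᵖ X}
    (hB : B ∈ commutant T D) {c : ℝ} (hc : 0 ≤ c) (hBc : ∀ z, ‖B z‖ ≤ c * ‖z‖) :
    IsSmoothing T D τ (C * c) (A * B) := by
  have hC := hA.nonneg
  refine ⟨mul_nonneg hC hc, mul_mem hA.mem_commutant hB, fun z => hA.apply_mem_domN_two (B z),
    fun z => ?_, fun z => ?_, fun z => ?_⟩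
  · calc ‖A (B z)‖ ≤ C * (c * ‖z‖) := (hA.norm_apply_le _).trans (by gcongr; exact hBc z)
      _ = C * c * ‖z‖ := by ring
  · calc ‖T (A (B z))‖ ≤ C * τ * (c * ‖z‖) := (hA.norm_T_apply_le _).trans (by gcongr; exact hBc z)
      _ = C * c * τ * ‖z‖ := by ring
  · calc ‖T (T (A (B z)))‖ ≤ C * τ ^ 2 * (c * ‖z‖) :=
          (hA.norm_T_T_apply_le _).trans (by gcongr; exact hBc z)
      _ = C * c * τ ^ 2 * ‖z‖ := by ring

theorem pow_apply_mem_domN_two_mul (hA : IsSmoothing T D τ C A) (p : ℕ) (z : X) :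
    (A ^ p) z ∈ domN T D (2 * p) := by
  induction p generalizing z with
  | zero => exact fun i hi => absurd hi (by omega)
  | succ p ih =>
    rw [pow_succ, Module.End.mul_apply, mul_add_one, add_comm]
    exact apply_mem_domN_add (pow_mem hA.mem_commutant p) ih (hA.apply_mem_domN_two z)

theorem norm_pow_T_pow_apply_le (hA : IsSmoothing T D τ C A) (hτ : 0 ≤ τ) {p j : ℕ}
    (hj : j ≤ 2 * p) (z : X) : ‖(T ^ j) ((A ^ p) z)‖ ≤ C ^ p * τ ^ j * ‖z‖ := by
  induction p generalizing j z with
  | zero =>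
    obtain rfl : j = 0 := by omega
    simp
  | succ p ih =>
    have hC := hA.nonneg
    rcases j with _ | _ | j
    · simpa using norm_pow_apply_le hC hA.norm_apply_le (p + 1) z
    · calc ‖(T ^ 1) ((A ^ (p + 1)) z)‖ = ‖T (A ((A ^ p) z))‖ := by
            rw [pow_one, pow_succ', Module.End.mul_apply]
        _ ≤ C * τ * (C ^ p * ‖z‖) := (hA.norm_T_apply_le _).trans
          (by gcongr; exact norm_pow_apply_le hC hA.norm_apply_le p z)
        _ = C ^ (p + 1) * τ ^ 1 * ‖z‖ := by ring
    · calc ‖(T ^ (j + 2)) ((A ^ (p + 1)) z)‖ = ‖(T ^ j) ((A ^ p) (T (T (A z))))‖ := by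
            rw [pow_succ A, Module.End.mul_apply, pow_add T, Module.End.mul_apply,
              pow_apply_comm_of_mem_commutant (pow_mem hA.mem_commutant p)
                (hA.apply_mem_domN_two z), sq, Module.End.mul_apply]
        _ ≤ C ^ p * τ ^ j * (C * τ ^ 2 * ‖z‖) :=
          (ih (by omega) _).trans (by gcongr; exact hA.norm_T_T_apply_le z)
        _ = C ^ (p + 1) * τ ^ (j + 2) * ‖z‖ := by ring

end IsSmoothing

end Smoothing

section Decomposition

variable {X : Type*} [NormedAddCommGroup X] [Module ℍᵐᵒᵖ X]
  {T : Module.End ℍᵐᵒᵖ X} {D : Submodule ℍᵐᵒᵖ X}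

theorem IsSmoothing.norm_one_sub_apply_le {τ C : ℝ} {F : Module.End ℍᵐᵒᵖ X}
    (hF : IsSmoothing T D τ C F) (z : X) : ‖(1 - F) z‖ ≤ (1 + C) * ‖z‖ := by
  rw [LinearMap.sub_apply, Module.End.one_apply, add_mul, one_mul]
  exact (norm_sub_le _ _).trans (add_le_add_right (hF.norm_apply_le z) _)

/-- `1 - (1 - F)ᵏ = F · ∑_{i<k} (1 - F)ⁱ`. -/
theorem IsSmoothing.one_sub_one_sub_pow {τ C : ℝ} {F : Module.End ℍᵐᵒᵖ X}
    (hF : IsSmoothing T D τ C F) (hτ : 0 ≤ τ) (k : ℕ) :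
    IsSmoothing T D τ (C * ∑ i ∈ Finset.range k, (1 + C) ^ i) (1 - (1 - F) ^ k) := by
  rw [← mul_neg_geom_sum, sub_sub_cancel]
  exact hF.mul_right hτ
    (Subring.sum_mem _ fun i _ => pow_mem (sub_mem (one_mem _) hF.mem_commutant) i)
    (Finset.sum_nonneg fun i _ => pow_nonneg (by linarith [hF.nonneg]) i)
    (norm_geom_sum_apply_le (by linarith [hF.nonneg]) hF.norm_one_sub_apply_le k)

/-- All `k` factors `E` are traded for powers of `T` in `‖Eᵏ w‖`, only `k - n` of them in
`‖Tⁿ Eᵏ w‖`; `τ ≥ 1` turns `τ^{-k}` into `τ^{-(k-n)}`. -/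
theorem norm_pow_apply_add_norm_T_pow_le {E : Module.End ℍᵐᵒᵖ X} (hE : E ∈ commutant T D)
    {τ C : ℝ} (hC : 0 ≤ C) (hτ : 1 ≤ τ) (hEb : ∀ z, ‖E z‖ ≤ (1 + C) * ‖z‖)
    (hEa : ∀ z ∈ D, ‖E z‖ ≤ C / τ * ‖T z‖) {n k : ℕ} (hnk : n ≤ k) {w : X}
    (hw : w ∈ domN T D k) :
    ‖(E ^ k) w‖ + ‖(T ^ n) ((E ^ k) w)‖
      ≤ (C ^ k + (1 + C) ^ n * C ^ (k - n)) / τ ^ (k - n) * ‖(T ^ k) w‖ := by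
  have hτ0 : 0 < τ := by linarith
  have hCτ : 0 ≤ C / τ := by positivity
  have hpow : (C / τ) ^ k ≤ C ^ k / τ ^ (k - n) := by
    rw [div_pow]
    exact div_le_div_of_nonneg_left (by positivity) (by positivity)
      (pow_le_pow_right₀ hτ (Nat.sub_le k n))
  have ha : ‖(E ^ k) w‖ ≤ C ^ k / τ ^ (k - n) * ‖(T ^ k) w‖ :=
    (norm_pow_apply_le_norm_pow_T hE hCτ hEa hw).trans (by gcongr)
  have hTa : ‖(T ^ n) ((E ^ k) w)‖
      ≤ (1 + C) ^ n * C ^ (k - n) / τ ^ (k - n) * ‖(T ^ k) w‖ := by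
    have hw' : (T ^ n) w ∈ domN T D (k - n) :=
      pow_apply_mem_domN T (by rwa [Nat.add_sub_cancel' hnk])
    calc ‖(T ^ n) ((E ^ k) w)‖ = ‖(E ^ n) ((E ^ (k - n)) ((T ^ n) w))‖ := by
          rw [pow_apply_comm_of_mem_commutant (pow_mem hE k) (domN_antitone T D hnk hw),
            ← Module.End.mul_apply (E ^ n), ← pow_add, Nat.add_sub_cancel' hnk]
      _ ≤ (1 + C) ^ n * ((C / τ) ^ (k - n) * ‖(T ^ (k - n)) ((T ^ n) w)‖) :=
          (norm_pow_apply_le (by linarith) hEb n _).trans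
            (by gcongr; exact norm_pow_apply_le_norm_pow_T hE hCτ hEa hw')
      _ = (1 + C) ^ n * C ^ (k - n) / τ ^ (k - n) * ‖(T ^ k) w‖ := by
          rw [← Module.End.mul_apply, ← pow_add, Nat.sub_add_cancel hnk, div_pow]; ring
  calc _ ≤ C ^ k / τ ^ (k - n) * ‖(T ^ k) w‖
        + (1 + C) ^ n * C ^ (k - n) / τ ^ (k - n) * ‖(T ^ k) w‖ := add_le_add ha hTa
    _ = _ := by ring

def HasKDecomposition (T : Module.End ℍᵐᵒᵖ X) (D : Set X) (n k m : ℕ) (K : ℝ) : Prop :=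
  ∀ τ ≥ (1 : ℝ), ∀ x ∈ domN T D k, ∃ a b, x = a + b ∧ a ∈ domN T D n ∧ b ∈ domN T D m ∧
    ‖a‖ + ‖(T ^ n) a‖ ≤ K / τ ^ (k - n) * ‖(T ^ k) x‖ ∧
    (∀ j ≤ m, ‖(T ^ j) b‖ ≤ K * τ ^ j * ‖x‖) ∧
    ‖(T ^ m) b‖ ≤ K * τ ^ (m - k) * ‖(T ^ k) x‖

/-- With `E = 1 - F` and `G = 1 - Eᵏ`, take `b = Gᵐ x` and `a = x - b = Eᵏ ∑_{l<m} Gˡ x`. -/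
theorem hasKDecomposition_of_isSmoothing {C : ℝ} {F : ℝ → Module.End ℍᵐᵒᵖ X}
    (hF : ∀ τ ≥ 1, IsSmoothing T D τ C (F τ))
    (hFx : ∀ τ ≥ 1, ∀ z ∈ D, ‖z - F τ z‖ ≤ C / τ * ‖T z‖) {n k m : ℕ} (hnk : n ≤ k)
    (hkm : k ≤ m) : ∃ K, 0 ≤ K ∧ HasKDecomposition T D n k m K := by
  have hC : 0 ≤ C := (hF 1 le_rfl).nonneg
  set cG := C * ∑ i ∈ Finset.range k, (1 + C) ^ i
  have hcG : 0 ≤ cG := by positivity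
  set cW := ∑ l ∈ Finset.range m, cG ^ l
  have hcW : 0 ≤ cW := by positivity
  set c₀ := C ^ k + (1 + C) ^ n * C ^ (k - n)
  have hc₀ : 0 ≤ c₀ := by positivity
  refine ⟨c₀ * cW + cG ^ m, by positivity, fun τ hτ x hx => ?_⟩
  have hτ0 : 0 < τ := by linarith
  set E := 1 - F τ
  have hE : E ∈ commutant T D := sub_mem (one_mem _) (hF τ hτ).mem_commutant
  have hG := (hF τ hτ).one_sub_one_sub_pow hτ0.le k
  set G := 1 - E ^ k
  set W := ∑ l ∈ Finset.range m, G ^ l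
  have hW : W ∈ commutant T D := Subring.sum_mem _ fun l _ => pow_mem hG.mem_commutant l
  have hWx : ‖(T ^ k) (W x)‖ ≤ cW * ‖(T ^ k) x‖ := by
    rw [pow_apply_comm_of_mem_commutant hW hx]
    exact norm_geom_sum_apply_le hcG hG.norm_apply_le m _
  have hGm : ∀ j ≤ 2 * m, ∀ z, ‖(T ^ j) ((G ^ m) z)‖ ≤ cG ^ m * τ ^ j * ‖z‖ :=
    fun j hj z => hG.norm_pow_T_pow_apply_le hτ0.le hj z
  refine ⟨(E ^ k) (W x), (G ^ m) x, ?_, ?_, ?_, ?_, fun j hj => ?_, ?_⟩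
  · have hsplit : E ^ k * W + G ^ m = 1 := by
      rw [← sub_sub_cancel 1 (E ^ k), mul_neg_geom_sum, sub_add_cancel]
    simpa using congrArg (fun A : Module.End ℍᵐᵒᵖ X => A x) hsplit.symm
  · exact domN_antitone T D hnk
      (apply_mem_domN_of_mem_commutant (pow_mem hE k) (apply_mem_domN_of_mem_commutant hW hx))
  · exact domN_antitone T D (by omega) (hG.pow_apply_mem_domN_two_mul m x)
  · refine (norm_pow_apply_add_norm_T_pow_le hE hC hτ (hF τ hτ).norm_one_sub_apply_le
      (fun z hz => by simpa [E] using hFx τ hτ z hz) hnk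
      (apply_mem_domN_of_mem_commutant hW hx)).trans ?_
    calc _ ≤ c₀ / τ ^ (k - n) * (cW * ‖(T ^ k) x‖) := by gcongr
      _ = c₀ * cW / τ ^ (k - n) * ‖(T ^ k) x‖ := by ring
      _ ≤ (c₀ * cW + cG ^ m) / τ ^ (k - n) * ‖(T ^ k) x‖ := by
          gcongr; linarith [pow_nonneg hcG m]
  · exact (hGm j (by omega) x).trans (by gcongr; linarith [mul_nonneg hc₀ hcW])
  · calc ‖(T ^ m) ((G ^ m) x)‖ = ‖(T ^ (m - k)) ((G ^ m) ((T ^ k) x))‖ := by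
          rw [← pow_apply_comm_of_mem_commutant (pow_mem hG.mem_commutant m) hx,
            ← Module.End.mul_apply (T ^ (m - k)), ← pow_add, Nat.sub_add_cancel hkm]
      _ ≤ (c₀ * cW + cG ^ m) * τ ^ (m - k) * ‖(T ^ k) x‖ :=
          (hGm _ (by omega) _).trans (by gcongr; linarith [mul_nonneg hc₀ hcW])

end Decomposition

section KFunctional

variable {X : Type*} [NormedAddCommGroup X] [Module ℍᵐᵒᵖ X]
  {T : Module.End ℍᵐᵒᵖ X} {n k m : ℕ}

theorem Kdom_le_of_eq_add {D : Set X} {t : ℝ} (ht : 0 ≤ t) {x a b : X} (hx : x = a + b)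
    (ha : a ∈ domN T D n) (hb : b ∈ domN T D m) :
    Kdom T D n m t x ≤ (‖a‖ + ‖(T ^ n) a‖) + t * (‖b‖ + ‖(T ^ m) b‖) := by
  refine csInf_le ⟨0, ?_⟩ ⟨a, b, hx, ha, hb, rfl⟩
  rintro r ⟨a', b', -, -, -, rfl⟩
  positivity

theorem exists_pow_eq_and_rpow_eq {t : ℝ} (ht : 0 < t) (hnk : n ≤ k) (hnm : n < m) :
    ∃ s > 0, t = s ^ (m - n) ∧ t ^ (((k : ℝ) - n) / ((m : ℝ) - n)) = s ^ (k - n) := by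
  obtain ⟨s, hs, rfl⟩ : ∃ s > 0, t = s ^ (m - n) :=
    ⟨t ^ ((↑(m - n) : ℝ)⁻¹), by positivity, (Real.rpow_inv_natCast_pow ht.le (by omega)).symm⟩
  refine ⟨s, hs, rfl, ?_⟩
  rw [← Real.rpow_natCast_mul hs.le, ← Real.rpow_natCast]
  congr 1
  have hmn : (m : ℝ) - n ≠ 0 := sub_ne_zero.mpr (by exact_mod_cast hnm.ne')
  rw [Nat.cast_sub hnm.le, Nat.cast_sub hnk]
  field_simp

namespace HasKDecomposition

variable {D : Submodule ℍᵐᵒᵖ X} {K : ℝ}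

theorem norm_pow_apply_le (h : HasKDecomposition T D n k m K) (hnm : n ≤ m) {x : X}
    (hx : x ∈ domN T D k) : ‖(T ^ n) x‖ ≤ K * (‖x‖ + ‖(T ^ k) x‖) := by
  obtain ⟨a, b, rfl, -, -, ha, hb, -⟩ := h 1 le_rfl x hx
  have hTb := hb n hnm
  simp only [one_pow, div_one, mul_one] at ha hTb
  calc ‖(T ^ n) (a + b)‖ ≤ ‖(T ^ n) a‖ + ‖(T ^ n) b‖ := by rw [map_add]; exact norm_add_le _ _
    _ ≤ K * (‖a + b‖ + ‖(T ^ k) (a + b)‖) := by linarith [norm_nonneg a]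

theorem Kdom_le (h : HasKDecomposition T D n k m K) (hK : 0 ≤ K) (hnk : n < k) (hkm : k < m)
    {t : ℝ} (ht : 0 < t) {x : X} (hx : x ∈ domN T D k) :
    Kdom T D n m t x
      ≤ (1 + 3 * K) * t ^ (((k : ℝ) - n) / ((m : ℝ) - n)) * (‖x‖ + ‖(T ^ k) x‖) := by
  obtain ⟨s, hs, rfl, hθ⟩ := exists_pow_eq_and_rpow_eq ht hnk.le (hnk.trans hkm)
  rw [hθ]
  have hx0 := norm_nonneg x
  have hTx0 := norm_nonneg ((T ^ k) x)
  rcases le_or_gt 1 s with hs1 | hs1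
  · have hsθ : 1 ≤ s ^ (k - n) := one_le_pow₀ hs1
    have hTn := h.norm_pow_apply_le (by omega) hx
    calc Kdom T D n m (s ^ (m - n)) x ≤ ‖x‖ + ‖(T ^ n) x‖ := by
          simpa using Kdom_le_of_eq_add (by positivity) (add_zero x).symm
            (domN_antitone T D hnk.le hx) (zero_mem_domN T D m)
      _ ≤ (1 + 3 * K) * 1 * (‖x‖ + ‖(T ^ k) x‖) := by nlinarith
      _ ≤ _ := by gcongr
  · obtain ⟨a, b, hxab, ha, hb, haK, hbK, hTbK⟩ := h s⁻¹ ((one_le_inv₀ hs).mpr hs1.le) x hx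
    have hb0 : ‖b‖ ≤ K * ‖x‖ := by simpa using hbK 0 (Nat.zero_le m)
    have hKτ : K / s⁻¹ ^ (k - n) = K * s ^ (k - n) := by rw [inv_pow, div_inv_eq_mul]
    have hsτ : s ^ (m - n) * s⁻¹ ^ (m - k) = s ^ (k - n) := by
      rw [show m - n = k - n + (m - k) by omega, pow_add, inv_pow,
        mul_inv_cancel_right₀ (by positivity)]
    have hsθ : s ^ (m - n) ≤ s ^ (k - n) := pow_le_pow_of_le_one hs.le hs1.le (by omega)
    calc Kdom T D n m (s ^ (m - n)) x
        ≤ (‖a‖ + ‖(T ^ n) a‖) + s ^ (m - n) * (‖b‖ + ‖(T ^ m) b‖) :=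
          Kdom_le_of_eq_add (by positivity) hxab ha hb
      _ ≤ K * s ^ (k - n) * ‖(T ^ k) x‖
          + s ^ (m - n) * (K * ‖x‖ + K * s⁻¹ ^ (m - k) * ‖(T ^ k) x‖) := by
          rw [← hKτ]; gcongr
      _ = K * s ^ (k - n) * ‖(T ^ k) x‖ + K * s ^ (m - n) * ‖x‖
          + K * (s ^ (m - n) * s⁻¹ ^ (m - k)) * ‖(T ^ k) x‖ := by ring
      _ ≤ (1 + 3 * K) * s ^ (k - n) * (‖x‖ + ‖(T ^ k) x‖) := by
          rw [hsτ]
          have := mul_le_mul_of_nonneg_left hsθ (mul_nonneg hK hx0)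
          have hsk := (pow_pos hs (k - n)).le
          nlinarith [mul_nonneg hsk hx0, mul_nonneg hsk hTx0, mul_nonneg (mul_nonneg hK hsk) hx0]

end HasKDecomposition

end KFunctional

theorem norm_two_mul_cos_smul_le {E : Type*} [SeminormedAddCommGroup E] [NormedSpace ℝ E]
    {τ : ℝ} (hτ : 0 ≤ τ) (ω : ℝ) (y : E) :
    ‖(2 * τ * Real.cos ω) • y‖ ≤ 2 * τ * ‖y‖ := by
  rw [norm_smul, Real.norm_eq_abs]
  gcongr
  rw [abs_mul, abs_of_nonneg (by positivity : (0 : ℝ) ≤ 2 * τ)]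
  exact mul_le_of_le_one_right (by positivity) (Real.abs_cos_le_one ω)

section Resolvent

variable {X : Type*} [NormedAddCommGroup X] [NormedSpace ℝ X] [Module ℍᵐᵒᵖ X]
  [SMulCommClass ℍᵐᵒᵖ ℝ X] {T : Module.End ℍᵐᵒᵖ X} {D : Submodule ℍᵐᵒᵖ X}

theorem real_smul_mem_commutant (hnorm : ∀ (x : X) (s : ℍ), ‖(op s) • x‖ = ‖x‖ * ‖s‖)
    (r : ℝ) {A : Module.End ℍᵐᵒᵖ X} (hA : A ∈ commutant T D) : r • A ∈ commutant T D :=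
  fun z hz => ⟨D.real_smul_mem hnorm r (hA z hz).1,
    by simp only [LinearMap.smul_apply, (hA z hz).2, Module.End.map_real_smul hnorm]⟩

theorem Qray_apply (T : Module.End ℍᵐᵒᵖ X) (ω t : ℝ) (y : X) :
    Qray T ω t y = T (T y) - (2 * t * Real.cos ω) • T y + t ^ 2 • y := by
  simp [Qray, sq]

theorem Qray_apply_T (hnorm : ∀ (x : X) (s : ℍ), ‖(op s) • x‖ = ‖x‖ * ‖s‖) (ω t : ℝ)
    (y : X) : Qray T ω t (T y) = T (Qray T ω t y) := by
  simp only [Qray_apply, map_add, map_sub, Module.End.map_real_smul hnorm]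

variable {ω τ M : ℝ} {R : Module.End ℍᵐᵒᵖ X}

theorem T_T_apply_of_Qray_apply (hQR : ∀ x, Qray T ω τ (R x) = x) (z : X) :
    T (T (R z)) = z + (2 * τ * Real.cos ω) • T (R z) - τ ^ 2 • R z := by
  calc T (T (R z)) = Qray T ω τ (R z) + (2 * τ * Real.cos ω) • T (R z) - τ ^ 2 • R z := by
        rw [Qray_apply]; abel
    _ = _ := by rw [hQR]

theorem mem_commutant_of_Qray (hnorm : ∀ (x : X) (s : ℍ), ‖(op s) • x‖ = ‖x‖ * ‖s‖)
    (hRdom : ∀ x, R x ∈ domN T D 2) (hQR : ∀ x, Qray T ω τ (R x) = x)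
    (hRQ : ∀ x ∈ domN T D 2, R (Qray T ω τ x) = x) : R ∈ commutant T D := by
  intro z hz
  have hRz : R z ∈ D := by simpa using hRdom z 0 (by norm_num)
  have hTRz : T (R z) ∈ D := by simpa using hRdom z 1 (by norm_num)
  have hTRz2 : T (R z) ∈ domN T D 2 := by
    intro i hi
    interval_cases i
    · simpa using hTRz
    · rw [pow_one, T_T_apply_of_Qray_apply hQR]
      exact D.sub_mem (D.add_mem hz (D.real_smul_mem hnorm _ hTRz)) (D.real_smul_mem hnorm _ hRz)
  refine ⟨hRz, ?_⟩
  rw [← hRQ _ hTRz2, Qray_apply_T hnorm, hQR]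

theorem norm_T_T_apply_le_of_Qray (hτ : 0 < τ) (hQR : ∀ x, Qray T ω τ (R x) = x)
    (hR1 : ∀ x, ‖R x‖ ≤ M / τ ^ 2 * ‖x‖) (hR2 : ∀ x, ‖T (R x)‖ ≤ M / τ * ‖x‖) (z : X) :
    ‖T (T (R z))‖ ≤ (1 + 3 * M) * ‖z‖ := by
  rw [T_T_apply_of_Qray_apply hQR]
  calc _ ≤ ‖z‖ + 2 * τ * (M / τ * ‖z‖) + τ ^ 2 * (M / τ ^ 2 * ‖z‖) := by
        refine (norm_sub_le _ _).trans (add_le_add ((norm_add_le _ _).trans ?_) ?_)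
        · exact add_le_add_right
            ((norm_two_mul_cos_smul_le hτ.le ω _).trans (by gcongr; exact hR2 z)) _
        · rw [norm_smul, Real.norm_of_nonneg (by positivity)]
          gcongr; exact hR1 z
    _ = (1 + 3 * M) * ‖z‖ := by field_simp; ring

theorem isSmoothing_of_Qray (hnorm : ∀ (x : X) (s : ℍ), ‖(op s) • x‖ = ‖x‖ * ‖s‖)
    (hM : 0 ≤ M) (hτ : 0 < τ) (hRdom : ∀ x, R x ∈ domN T D 2)
    (hQR : ∀ x, Qray T ω τ (R x) = x) (hRQ : ∀ x ∈ domN T D 2, R (Qray T ω τ x) = x)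
    (hR1 : ∀ x, ‖R x‖ ≤ M / τ ^ 2 * ‖x‖) (hR2 : ∀ x, ‖T (R x)‖ ≤ M / τ * ‖x‖) :
    IsSmoothing T D τ (1 + 3 * M) (τ ^ 2 • R) := by
  have hsmul : ∀ y : X, ‖τ ^ 2 • y‖ = τ ^ 2 * ‖y‖ := fun y => by
    rw [norm_smul, Real.norm_of_nonneg (by positivity)]
  refine ⟨by linarith, real_smul_mem_commutant hnorm _ (mem_commutant_of_Qray hnorm hRdom hQR hRQ),
    fun z => real_smul_mem_domN hnorm _ (hRdom z), fun z => ?_, fun z => ?_, fun z => ?_⟩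
  · calc ‖(τ ^ 2 • R) z‖ = τ ^ 2 * ‖R z‖ := by rw [LinearMap.smul_apply, hsmul]
      _ ≤ τ ^ 2 * (M / τ ^ 2 * ‖z‖) := by gcongr; exact hR1 z
      _ ≤ (1 + 3 * M) * ‖z‖ := by field_simp; nlinarith [norm_nonneg z]
  · calc ‖T ((τ ^ 2 • R) z)‖ = τ ^ 2 * ‖T (R z)‖ := by
          rw [LinearMap.smul_apply, Module.End.map_real_smul hnorm, hsmul]
      _ ≤ τ ^ 2 * (M / τ * ‖z‖) := by gcongr; exact hR2 z
      _ ≤ (1 + 3 * M) * τ * ‖z‖ := by field_simp; nlinarith [norm_nonneg z]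
  · calc ‖T (T ((τ ^ 2 • R) z))‖ = τ ^ 2 * ‖T (T (R z))‖ := by
          rw [LinearMap.smul_apply, Module.End.map_real_smul hnorm,
            Module.End.map_real_smul hnorm, hsmul]
      _ ≤ τ ^ 2 * ((1 + 3 * M) * ‖z‖) := by
          gcongr; exact norm_T_T_apply_le_of_Qray hτ hQR hR1 hR2 z
      _ = (1 + 3 * M) * τ ^ 2 * ‖z‖ := by ring

theorem norm_sub_apply_le_of_Qray (hRc : R ∈ commutant T D) (hτ : 0 < τ)
    (hQR : ∀ x, Qray T ω τ (R x) = x) (hR1 : ∀ x, ‖R x‖ ≤ M / τ ^ 2 * ‖x‖)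
    (hR2 : ∀ x, ‖T (R x)‖ ≤ M / τ * ‖x‖) {z : X} (hz : z ∈ D) :
    ‖z - (τ ^ 2 • R) z‖ ≤ (1 + 3 * M) / τ * ‖T z‖ := by
  have hsplit : z - (τ ^ 2 • R) z = T (R (T z)) - (2 * τ * Real.cos ω) • R (T z) := by
    rw [(hRc z hz).2, T_T_apply_of_Qray_apply hQR, LinearMap.smul_apply]; abel
  rw [hsplit]
  calc _ ≤ M / τ * ‖T z‖ + 2 * τ * (M / τ ^ 2 * ‖T z‖) :=
        (norm_sub_le _ _).trans (add_le_add (hR2 _)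
          ((norm_two_mul_cos_smul_le hτ.le ω _).trans (by gcongr; exact hR1 _)))
    _ ≤ (1 + 3 * M) / τ * ‖T z‖ := by
        field_simp; nlinarith [norm_nonneg (T z)]

end Resolvent

theorem dom_pow_K_intermediate_general
    {X : Type*} [NormedAddCommGroup X] [NormedSpace ℝ X]
    [Module ℍᵐᵒᵖ X] [SMulCommClass ℍᵐᵒᵖ ℝ X]
    -- right Banach space: `‖x·s‖ = ‖x‖·|s|`
    (hnorm : ∀ (x : X) (s : ℍ), ‖(op s) • x‖ = ‖x‖ * ‖s‖)
    (T : Module.End ℍᵐᵒᵖ X) (D : Submodule ℍᵐᵒᵖ X)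
    -- the ray `S_ω` lies in the S-resolvent set, with pseudo-resolvents `R t = Q_{te^{iω}}(T)⁻¹`
    (ω : ℝ)
    (M : ℝ) (hM : 0 ≤ M)
    (R : ℝ → Module.End ℍᵐᵒᵖ X)
    (hRdom : ∀ t > 0, ∀ x : X, R t x ∈ domN T (D : Set X) 2)
    (hQR : ∀ t > 0, ∀ x : X, Qray T ω t (R t x) = x)
    (hRQ : ∀ t > 0, ∀ x ∈ domN T (D : Set X) 2, R t (Qray T ω t x) = x)
    -- the resolvent bounds `‖Q_s⁻¹‖ ≤ M/|s|²` and `‖T Q_s⁻¹‖ ≤ M/|s|` on `S_ω`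
    (hR1 : ∀ t > 0, ∀ x : X, ‖R t x‖ ≤ M / t ^ 2 * ‖x‖)
    (hR2 : ∀ t > 0, ∀ x : X, ‖T (R t x)‖ ≤ M / t * ‖x‖)
    (n k m : ℕ) (hnk : n < k) (hkm : k < m) :
    ∃ C : ℝ, 0 ≤ C ∧ ∀ t > 0, ∀ x ∈ domN T (D : Set X) k,
      Kdom T (D : Set X) n m t x
        ≤ C * t ^ (((k : ℝ) - n) / ((m : ℝ) - n)) * (‖x‖ + ‖(T ^ k) x‖) := by
  have hF : ∀ τ ≥ (1 : ℝ), IsSmoothing T D τ (1 + 3 * M) (τ ^ 2 • R τ) ∧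
      ∀ z ∈ D, ‖z - (τ ^ 2 • R τ) z‖ ≤ (1 + 3 * M) / τ * ‖T z‖ := by
    intro τ hτ
    have hτ0 : 0 < τ := by linarith
    have hRc := mem_commutant_of_Qray hnorm (hRdom τ hτ0) (hQR τ hτ0) (hRQ τ hτ0)
    exact ⟨isSmoothing_of_Qray hnorm hM hτ0 (hRdom τ hτ0) (hQR τ hτ0) (hRQ τ hτ0) (hR1 τ hτ0)
      (hR2 τ hτ0), fun z => norm_sub_apply_le_of_Qray hRc hτ0 (hQR τ hτ0) (hR1 τ hτ0) (hR2 τ hτ0)⟩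
  obtain ⟨K, hK, hdec⟩ := hasKDecomposition_of_isSmoothing (fun τ hτ => (hF τ hτ).1)
    (fun τ hτ => (hF τ hτ).2) hnk.le hkm.le
  exact ⟨1 + 3 * K, by positivity, fun t ht x hx => hdec.Kdom_le hK hnk hkm ht hx⟩

/-- `D(Tᵏ) ∈ K_{(k−n)/(m−n)}(D(Tⁿ), D(T^m))`, i.e.
`K(t,x) ≤ C t^{(k−n)/(m−n)} ‖x‖_{D(Tᵏ)}` for all `t > 0`, `x ∈ D(Tᵏ)`. -/
theorem dom_pow_K_intermediate
    {X : Type*} [NormedAddCommGroup X] [NormedSpace ℝ X] [CompleteSpace X]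
    [Module ℍᵐᵒᵖ X] [SMulCommClass ℍᵐᵒᵖ ℝ X]
    -- right Banach space: `‖x·s‖ = ‖x‖·|s|`
    (hnorm : ∀ (x : X) (s : ℍ), ‖(op s) • x‖ = ‖x‖ * ‖s‖)
    -- `T` is a closed right linear operator with domain `D`
    (T : Module.End ℍᵐᵒᵖ X) (D : Submodule ℍᵐᵒᵖ X)
    (hclosed : IsClosed {p : X × X | p.1 ∈ (D : Set X) ∧ T p.1 = p.2})
    -- the ray `S_ω` lies in the S-resolvent set, with pseudo-resolvents `R t = Q_{te^{iω}}(T)⁻¹`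
    (ω : ℝ) (hω : ω ∈ Set.Icc (0:ℝ) Real.pi)
    (M : ℝ) (hM : 0 ≤ M)
    (R : ℝ → Module.End ℍᵐᵒᵖ X)
    (hRcont : ∀ t > 0, Continuous (R t))
    (hRdom : ∀ t > 0, ∀ x : X, R t x ∈ domN T (D : Set X) 2)
    (hQR : ∀ t > 0, ∀ x : X, Qray T ω t (R t x) = x)
    (hRQ : ∀ t > 0, ∀ x ∈ domN T (D : Set X) 2, R t (Qray T ω t x) = x)
    -- the resolvent bounds `‖Q_s⁻¹‖ ≤ M/|s|²` and `‖T Q_s⁻¹‖ ≤ M/|s|` on `S_ω`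
    (hR1 : ∀ t > 0, ∀ x : X, ‖R t x‖ ≤ M / t ^ 2 * ‖x‖)
    (hR2 : ∀ t > 0, ∀ x : X, ‖T (R t x)‖ ≤ M / t * ‖x‖)
    (n k m : ℕ) (hnk : n < k) (hkm : k < m) :
    ∃ C : ℝ, 0 ≤ C ∧ ∀ t > 0, ∀ x ∈ domN T (D : Set X) k,
      Kdom T (D : Set X) n m t x
        ≤ C * t ^ (((k : ℝ) - n) / ((m : ℝ) - n)) * (‖x‖ + ‖(T ^ k) x‖) :=
  dom_pow_K_intermediate_general hnorm T D ω M hM R hRdom hQR hRQ hR1 hR2 n k m hnk hkm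
end
end

section
/- Let T satisfy the sectorial-type hypotheses, n ∈ ℕ, and x ∈ X. Then for all t > 0, ψ_x(t) ≤ 2·(1+3M)^{⌈n/2⌉}·K(t^{-n}, x), where K is the K-functional of the couple X, D(Tⁿ) and ψ_x is defined by ψ_x(t) = ‖TⁿQ_{te^{iω}}(T)^{−n/2}x‖ for n even and ψ_x(t) = ‖T^{n+1}Q_{te^{iω}}(T)^{−(n+1)/2}x‖ + t‖TⁿQ_{te^{iω}}(T)^{−(n+1)/2}x‖ for n odd. -/
noncomputable section

open MulOpposite

local notation "ℍ" => Quaternion ℝ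

open MeasureTheory ENNReal

/-- The `K`-functional of the couple `X`, `D(Tⁿ)` (the latter with graph norm). -/
def KX {X : Type*} [NormedAddCommGroup X] [Module ℍᵐᵒᵖ X]
    (T : Module.End ℍᵐᵒᵖ X) (D : Set X) (n : ℕ) (t : ℝ) (x : X) : ℝ :=
  sInf {r | ∃ a b, x = a + b ∧ b ∈ domN T D n ∧ r = ‖a‖ + t * (‖b‖ + ‖(T ^ n) b‖)}

/-- The measure `dt/t` on `(0,∞)`. -/
def mustar : Measure ℝ :=
  (volume.restrict (Set.Ioi (0:ℝ))).withDensity fun t => ENNReal.ofReal t⁻¹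

/-- The resolvent quantity `ψ_x(t)` of the paper (`R t` playing the role of
`Q_{te^{iω}}(T)⁻¹`): `‖Tⁿ (R t)^{n/2} x‖` for even `n`, and
`‖T^{n+1} (R t)^{(n+1)/2} x‖ + t ‖Tⁿ (R t)^{(n+1)/2} x‖` for odd `n`. -/
def psi {X : Type*} [NormedAddCommGroup X] [Module ℍᵐᵒᵖ X]
    (T : Module.End ℍᵐᵒᵖ X) (R : ℝ → Module.End ℍᵐᵒᵖ X) (n : ℕ) (x : X) (t : ℝ) : ℝ :=
  if Even n then ‖(T ^ n) (((R t) ^ (n / 2)) x)‖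
  else ‖(T ^ (n + 1)) (((R t) ^ ((n + 1) / 2)) x)‖
    + t * ‖(T ^ n) (((R t) ^ ((n + 1) / 2)) x)‖

/-!
Write `x = a + b` with `b ∈ D(Tⁿ)`; `ψ_x(t)` is subadditive in `x`, so the two pieces can be bounded
separately. Writing `Q = Q_{te^{iω}}(T)`, the identity `Q Q⁻¹ = 1` reads
`T² Q⁻¹ = 1 + 2t cos ω · T Q⁻¹ − t² Q⁻¹`, so the resolvent bounds give `‖T² Q⁻¹‖ ≤ 1 + 3M`; since
`Q⁻¹` commutes with `T` on `D(T)`, also `‖T^{2k} Q^{-k}‖ ≤ (1 + 3M)^k`, which controls the `a`-part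
by `‖a‖`. For `b ∈ D(Tⁿ)` one moves `Tⁿ` past `Q^{-k}` instead, and `‖Q⁻¹‖ ≤ M/t²`,
`‖T Q⁻¹‖ ≤ M/t` produce the factor `t^{-n}` in front of `‖Tⁿ b‖`.
-/

section Commute

variable {X : Type*} [AddCommGroup X] [Module ℍᵐᵒᵖ X] {T S : Module.End ℍᵐᵒᵖ X} {D : Set X}

theorem mem_domN_two {x : X} : x ∈ domN T D 2 ↔ x ∈ D ∧ T x ∈ D := by
  simp [domN, Nat.le_one_iff_eq_zero_or_eq_one, or_imp, forall_and]

theorem pow_apply_comm_of_mem_domN (hcomm : ∀ y ∈ D, T (S y) = S (T y)) :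
    ∀ {j : ℕ} {z : X}, z ∈ domN T D j → (T ^ j) (S z) = S ((T ^ j) z)
  | 0, _, _ => rfl
  | j + 1, z, hz => by
    rw [pow_succ', Module.End.mul_apply, Module.End.mul_apply,
      pow_apply_comm_of_mem_domN hcomm fun i hi => hz i (by omega), hcomm _ (hz j j.lt_succ_self)]

theorem apply_mem_domN (hSD : ∀ y, S y ∈ D) (hcomm : ∀ y ∈ D, T (S y) = S (T y))
    {j : ℕ} {z : X} (hz : z ∈ domN T D j) : S z ∈ domN T D j := fun i hi => by
  rw [pow_apply_comm_of_mem_domN hcomm fun i' hi' => hz i' (hi'.trans hi)]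
  exact hSD _

theorem pow_apply_pow_comm_of_mem_domN (hSD : ∀ y, S y ∈ D)
    (hcomm : ∀ y ∈ D, T (S y) = S (T y)) (j : ℕ) :
    ∀ (k : ℕ) {z : X}, z ∈ domN T D j → (T ^ j) ((S ^ k) z) = (S ^ k) ((T ^ j) z)
  | 0, _, _ => rfl
  | k + 1, z, hz => by
    rw [pow_succ, Module.End.mul_apply, Module.End.mul_apply,
      pow_apply_pow_comm_of_mem_domN hSD hcomm j k (apply_mem_domN hSD hcomm hz),
      pow_apply_comm_of_mem_domN hcomm hz]

end Commute

section QrayInverse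

variable {X : Type*} [AddCommGroup X] [Module ℍᵐᵒᵖ X] [Module ℝ X] [SMulCommClass ℍᵐᵒᵖ ℝ X]
  {T S : Module.End ℍᵐᵒᵖ X} {D : Submodule ℍᵐᵒᵖ X} {ω t : ℝ}

/-- `S` is the inverse `Q_{te^{iω}}(T)⁻¹` of `Qray T ω t` on the domain `D(T²)`. -/
structure IsQrayInverse (T : Module.End ℍᵐᵒᵖ X) (D : Submodule ℍᵐᵒᵖ X) (ω t : ℝ)
    (S : Module.End ℍᵐᵒᵖ X) : Prop where
  mem_domN : ∀ x, S x ∈ domN T (D : Set X) 2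
  qray_apply : ∀ x, Qray T ω t (S x) = x
  apply_qray : ∀ x ∈ domN T (D : Set X) 2, S (Qray T ω t x) = x

namespace IsQrayInverse

variable (h : IsQrayInverse T D ω t S)
include h

theorem apply_mem (x : X) : S x ∈ D := (mem_domN_two.1 (h.mem_domN x)).1

theorem T_apply_mem (x : X) : T (S x) ∈ D := (mem_domN_two.1 (h.mem_domN x)).2

theorem T_T_apply (y : X) :
    T (T (S y)) = y + (2 * t * Real.cos ω) • T (S y) - (t ^ 2) • S y := by
  have hy := h.qray_apply y
  simp only [Qray, LinearMap.sub_apply, LinearMap.add_apply, LinearMap.smul_apply,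
    Module.End.one_apply, pow_two T, Module.End.mul_apply] at hy
  linear_combination (norm := module) hy

variable (hS : ∀ (r : ℝ) (y : X), S (r • y) = r • S y)
  (hTS : ∀ (r : ℝ) (y : X), T (S (r • y)) = r • T (S y))
include hS hTS

theorem qray_T_apply (y : X) : Qray T ω t (T (S y)) = T y := by
  have hcT : T ((2 * t * Real.cos ω) • T (S y)) = (2 * t * Real.cos ω) • T (T (S y)) := by
    rw [← hTS, h.T_T_apply, h.T_T_apply, hTS, hS]
    module
  have htT : T ((t ^ 2) • S y) = (t ^ 2) • T (S y) := by rw [← hS, hTS]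
  simp only [Qray, LinearMap.sub_apply, LinearMap.add_apply, LinearMap.smul_apply,
    Module.End.one_apply, pow_two T, Module.End.mul_apply]
  rw [h.T_T_apply y, map_sub, map_add, ← h.T_T_apply, hcT, htT]
  abel

theorem T_apply_comm {y : X} (hy : y ∈ D) : T (S y) = S (T y) := by
  have hdom : T (S y) ∈ domN T (D : Set X) 2 := by
    refine mem_domN_two.2 ⟨h.T_apply_mem y, ?_⟩
    rw [h.T_T_apply, ← hTS, ← hS]
    exact D.sub_mem (D.add_mem hy (h.T_apply_mem _)) (h.apply_mem _)
  rw [← h.apply_qray _ hdom, h.qray_T_apply hS hTS]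

end IsQrayInverse

end QrayInverse

section Bounds

variable {X : Type*} [SeminormedAddCommGroup X] [Module ℍᵐᵒᵖ X] {T S : Module.End ℍᵐᵒᵖ X}
  {D : Set X} {A : ℝ}

theorem norm_pow_apply_le_s17 (hA : 0 ≤ A) (hS : ∀ y, ‖S y‖ ≤ A * ‖y‖) :
    ∀ (k : ℕ) (z : X), ‖(S ^ k) z‖ ≤ A ^ k * ‖z‖
  | 0, z => by simp
  | k + 1, z => by
    rw [pow_succ', Module.End.mul_apply, pow_succ', mul_assoc]
    exact (hS _).trans (mul_le_mul_of_nonneg_left (norm_pow_apply_le_s17 hA hS k z) hA)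

variable (hSD : ∀ y, S y ∈ domN T D 2) (hcomm : ∀ y ∈ D, T (S y) = S (T y))
include hSD hcomm

theorem norm_pow_two_mul_apply_pow_le (hA : 0 ≤ A) (hTS : ∀ y, ‖T (T (S y))‖ ≤ A * ‖y‖) :
    ∀ (k : ℕ) (z : X), ‖(T ^ (2 * k)) ((S ^ k) z)‖ ≤ A ^ k * ‖z‖
  | 0, z => by simp
  | k + 1, z => by
    have hD : ∀ y, S y ∈ D := fun y => hSD y 0 two_pos
    rw [mul_add, mul_one, pow_add, Module.End.mul_apply, pow_succ S, Module.End.mul_apply,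
      pow_apply_pow_comm_of_mem_domN hD hcomm 2 k (hSD z), pow_two T, Module.End.mul_apply,
      pow_succ A, mul_assoc]
    exact (norm_pow_two_mul_apply_pow_le hA hTS k _).trans
      (mul_le_mul_of_nonneg_left (hTS z) (pow_nonneg hA k))

theorem norm_pow_two_mul_add_one_apply_pow_succ_le (hA : 0 ≤ A)
    (hTS : ∀ y, ‖T (T (S y))‖ ≤ A * ‖y‖) (k : ℕ) (z : X) :
    ‖(T ^ (2 * k + 1)) ((S ^ (k + 1)) z)‖ ≤ A ^ k * ‖T (S z)‖ := by
  have hD : ∀ y, S y ∈ D := fun y => hSD y 0 two_pos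
  have hz : S z ∈ domN T D 1 := fun i hi => hSD z i (hi.trans one_lt_two)
  have hTS' : T ((S ^ k) (S z)) = (S ^ k) (T (S z)) := by
    simpa only [pow_one] using pow_apply_pow_comm_of_mem_domN hD hcomm 1 k hz
  rw [pow_succ T, Module.End.mul_apply, pow_succ S, Module.End.mul_apply, hTS']
  exact norm_pow_two_mul_apply_pow_le hSD hcomm hA hTS k _

end Bounds

namespace IsQrayInverse

variable {X : Type*} [NormedAddCommGroup X] [NormedSpace ℝ X] [Module ℍᵐᵒᵖ X]
  [SMulCommClass ℍᵐᵒᵖ ℝ X] {T S : Module.End ℍᵐᵒᵖ X} {D : Submodule ℍᵐᵒᵖ X} {ω t M : ℝ}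

/-- The real structure of `X` is unrelated to the quaternionic one, so `S` and `T S` commute with
the real scalars in `Qray` only because they are bounded additive maps, hence continuous. -/
theorem T_apply_comm_of_norm_le (h : IsQrayInverse T D ω t S) {C₁ C₂ : ℝ}
    (hS1 : ∀ x, ‖S x‖ ≤ C₁ * ‖x‖) (hS2 : ∀ x, ‖T (S x)‖ ≤ C₂ * ‖x‖) {y : X} (hy : y ∈ D) :
    T (S y) = S (T y) :=
  h.T_apply_comm (map_real_smul S (AddMonoidHomClass.continuous_of_bound S C₁ hS1))
    (map_real_smul (T * S) (AddMonoidHomClass.continuous_of_bound (T * S) C₂ hS2)) hy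

theorem norm_T_T_apply_le (h : IsQrayInverse T D ω t S) (ht : 0 < t)
    (hS1 : ∀ x, ‖S x‖ ≤ M / t ^ 2 * ‖x‖) (hS2 : ∀ x, ‖T (S x)‖ ≤ M / t * ‖x‖) (y : X) :
    ‖T (T (S y))‖ ≤ (1 + 3 * M) * ‖y‖ := by
  have hc : ‖2 * t * Real.cos ω‖ ≤ 2 * t := by
    rw [Real.norm_eq_abs, abs_mul, abs_of_pos (by positivity : 0 < 2 * t)]
    exact mul_le_of_le_one_right (by positivity) (Real.abs_cos_le_one ω)
  calc ‖T (T (S y))‖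
      ≤ ‖y‖ + ‖2 * t * Real.cos ω‖ * ‖T (S y)‖ + ‖t ^ 2‖ * ‖S y‖ := by
        rw [h.T_T_apply, ← norm_smul, ← norm_smul]
        exact (norm_sub_le _ _).trans (add_le_add_left (norm_add_le _ _) _)
    _ ≤ ‖y‖ + 2 * t * (M / t * ‖y‖) + t ^ 2 * (M / t ^ 2 * ‖y‖) := by
        rw [Real.norm_of_nonneg (sq_nonneg t)]
        gcongr
        exacts [hS2 y, hS1 y]
    _ = (1 + 3 * M) * ‖y‖ := by field_simp; ring

end IsQrayInverse

section Psi

variable {X : Type*} [NormedAddCommGroup X] [Module ℍᵐᵒᵖ X] {T : Module.End ℍᵐᵒᵖ X}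
  {R : ℝ → Module.End ℍᵐᵒᵖ X} {t : ℝ} (m : ℕ) (x : X)

theorem psi_two_mul : psi T R (2 * m) x t = ‖(T ^ (2 * m)) ((R t ^ m) x)‖ := by
  simp [psi]

theorem psi_two_mul_add_one : psi T R (2 * m + 1) x t =
    ‖(T ^ (2 * (m + 1))) ((R t ^ (m + 1)) x)‖ + t * ‖(T ^ (2 * m + 1)) ((R t ^ (m + 1)) x)‖ := by
  simp only [psi, Nat.not_even_two_mul_add_one, if_false]
  rw [show 2 * m + 1 + 1 = 2 * (m + 1) by ring, Nat.mul_div_cancel_left _ two_pos]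

theorem psi_add_le (ht : 0 ≤ t) (n : ℕ) (a b : X) :
    psi T R n (a + b) t ≤ psi T R n a t + psi T R n b t := by
  unfold psi
  split_ifs
  · simpa only [map_add] using norm_add_le _ _
  · simp only [map_add]
    nlinarith [norm_add_le ((T ^ (n + 1)) ((R t ^ ((n + 1) / 2)) a))
      ((T ^ (n + 1)) ((R t ^ ((n + 1) / 2)) b)),
      norm_add_le ((T ^ n) ((R t ^ ((n + 1) / 2)) a)) ((T ^ n) ((R t ^ ((n + 1) / 2)) b))]

end Psi

section PsiBounds

variable {X : Type*} [NormedAddCommGroup X] [NormedSpace ℝ X] [Module ℍᵐᵒᵖ X]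
  [SMulCommClass ℍᵐᵒᵖ ℝ X] {T : Module.End ℍᵐᵒᵖ X} {D : Submodule ℍᵐᵒᵖ X}
  {R : ℝ → Module.End ℍᵐᵒᵖ X} {ω t M : ℝ}
  (ht : 0 < t) (hM : 0 ≤ M) (hR : IsQrayInverse T D ω t (R t))
  (hR1 : ∀ x, ‖R t x‖ ≤ M / t ^ 2 * ‖x‖) (hR2 : ∀ x, ‖T (R t x)‖ ≤ M / t * ‖x‖)
include ht hM hR hR1 hR2

theorem psi_le_norm (n : ℕ) (a : X) :
    psi T R n a t ≤ 2 * (1 + 3 * M) ^ ((n + 1) / 2) * ‖a‖ := by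
  have hA : 0 ≤ 1 + 3 * M := by linarith
  have hcomm : ∀ y ∈ D, T (R t y) = R t (T y) := fun y hy =>
    hR.T_apply_comm_of_norm_le hR1 hR2 hy
  have hTT := hR.norm_T_T_apply_le ht hR1 hR2
  obtain ⟨m, rfl | rfl⟩ := Nat.even_or_odd' n
  · rw [psi_two_mul, show (2 * m + 1) / 2 = m by omega]
    linarith [norm_pow_two_mul_apply_pow_le hR.mem_domN hcomm hA hTT m a,
      (by positivity : 0 ≤ (1 + 3 * M) ^ m * ‖a‖)]
  · rw [psi_two_mul_add_one, show (2 * m + 1 + 1) / 2 = m + 1 by omega]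
    have hodd : t * ‖(T ^ (2 * m + 1)) ((R t ^ (m + 1)) a)‖ ≤ (1 + 3 * M) ^ (m + 1) * ‖a‖ :=
      calc t * ‖(T ^ (2 * m + 1)) ((R t ^ (m + 1)) a)‖
          ≤ t * ((1 + 3 * M) ^ m * (M / t * ‖a‖)) := by
            gcongr
            exact (norm_pow_two_mul_add_one_apply_pow_succ_le hR.mem_domN hcomm hA hTT m a).trans
              (by gcongr; exact hR2 a)
        _ = M * ((1 + 3 * M) ^ m * ‖a‖) := by field_simp
        _ ≤ (1 + 3 * M) ^ (m + 1) * ‖a‖ := by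
            rw [pow_succ', mul_assoc]
            gcongr
            linarith
    linarith [norm_pow_two_mul_apply_pow_le hR.mem_domN hcomm hA hTT (m + 1) a]

theorem psi_le_of_mem_domN {n : ℕ} {b : X} (hb : b ∈ domN T (D : Set X) n) :
    psi T R n b t ≤ 2 * (1 + 3 * M) ^ ((n + 1) / 2) * ((t ^ n)⁻¹ * ‖(T ^ n) b‖) := by
  have hMA : M ≤ 1 + 3 * M := by linarith
  have hcomm : ∀ y ∈ D, T (R t y) = R t (T y) := fun y hy =>
    hR.T_apply_comm_of_norm_le hR1 hR2 hy
  have hTR := pow_apply_pow_comm_of_mem_domN hR.apply_mem hcomm n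
  have hpow := norm_pow_apply_le_s17 (div_nonneg hM (sq_nonneg t)) hR1
  set w := (T ^ n) b
  obtain ⟨m, rfl | rfl⟩ := Nat.even_or_odd' n
  · rw [psi_two_mul, show (2 * m + 1) / 2 = m by omega, hTR m hb]
    calc ‖(R t ^ m) w‖ ≤ (M / t ^ 2) ^ m * ‖w‖ := hpow m w
      _ = M ^ m * ((t ^ (2 * m))⁻¹ * ‖w‖) := by rw [div_pow, pow_mul]; ring
      _ ≤ 2 * (1 + 3 * M) ^ m * ((t ^ (2 * m))⁻¹ * ‖w‖) := by
          gcongr ?_ * _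
          exact (pow_le_pow_left₀ hM hMA m).trans
            (le_mul_of_one_le_left (pow_nonneg (hM.trans hMA) m) one_le_two)
  · have e1 : (T ^ (2 * (m + 1))) ((R t ^ (m + 1)) b) = T (R t ((R t ^ m) w)) := by
      rw [show 2 * (m + 1) = 2 * m + 1 + 1 by ring, pow_succ', Module.End.mul_apply, hTR _ hb,
        pow_succ', Module.End.mul_apply]
    rw [psi_two_mul_add_one, show (2 * m + 1 + 1) / 2 = m + 1 by omega, e1, hTR _ hb]
    calc ‖T (R t ((R t ^ m) w))‖ + t * ‖(R t ^ (m + 1)) w‖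
        ≤ M / t * ((M / t ^ 2) ^ m * ‖w‖) + t * ((M / t ^ 2) ^ (m + 1) * ‖w‖) := by
          gcongr
          exacts [(hR2 _).trans (by gcongr; exact hpow m w), hpow _ w]
      _ = 2 * M ^ (m + 1) * ((t ^ (2 * m + 1))⁻¹ * ‖w‖) := by
          rw [div_pow, div_pow, ← pow_mul, ← pow_mul]
          field_simp
          ring
      _ ≤ 2 * (1 + 3 * M) ^ (m + 1) * ((t ^ (2 * m + 1))⁻¹ * ‖w‖) := by
          gcongr 2 * ?_ * _
          exact pow_le_pow_left₀ hM hMA _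

end PsiBounds

theorem le_mul_KX {X : Type*} [NormedAddCommGroup X] [Module ℍᵐᵒᵖ X]
    {T : Module.End ℍᵐᵒᵖ X} {D : Set X} (hD : (0 : X) ∈ D) {n : ℕ} {τ C y : ℝ} {x : X}
    (hC : 0 < C)
    (h : ∀ a b, x = a + b → b ∈ domN T D n → y ≤ C * (‖a‖ + τ * (‖b‖ + ‖(T ^ n) b‖))) :
    y ≤ C * KX T D n τ x := by
  rw [← div_le_iff₀' hC]
  refine le_csInf ⟨_, x, 0, (add_zero x).symm, fun j _ => by simpa using hD, rfl⟩ ?_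
  rintro r ⟨a, b, hab, hb, rfl⟩
  exact (div_le_iff₀' hC).2 (h a b hab hb)

theorem psi_le_K_general
    {X : Type*} [NormedAddCommGroup X] [NormedSpace ℝ X]
    [Module ℍᵐᵒᵖ X] [SMulCommClass ℍᵐᵒᵖ ℝ X]
    -- `T` is a closed right linear operator with domain `D`
    (T : Module.End ℍᵐᵒᵖ X) (D : Submodule ℍᵐᵒᵖ X)
    -- the ray `S_ω` lies in the S-resolvent set, with pseudo-resolvents `R t = Q_{te^{iω}}(T)⁻¹`
    (ω : ℝ)
    (M : ℝ) (hM : 0 ≤ M)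
    (R : ℝ → Module.End ℍᵐᵒᵖ X)
    (hRdom : ∀ t > 0, ∀ x : X, R t x ∈ domN T (D : Set X) 2)
    (hQR : ∀ t > 0, ∀ x : X, Qray T ω t (R t x) = x)
    (hRQ : ∀ t > 0, ∀ x ∈ domN T (D : Set X) 2, R t (Qray T ω t x) = x)
    -- the resolvent bounds `‖Q_s⁻¹‖ ≤ M/|s|²` and `‖T Q_s⁻¹‖ ≤ M/|s|` on `S_ω`
    (hR1 : ∀ t > 0, ∀ x : X, ‖R t x‖ ≤ M / t ^ 2 * ‖x‖)
    (hR2 : ∀ t > 0, ∀ x : X, ‖T (R t x)‖ ≤ M / t * ‖x‖)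
    (n : ℕ) :
    ∀ x : X, ∀ t > (0:ℝ),
      psi T R n x t ≤ 2 * (1 + 3 * M) ^ ((n + 1) / 2) * KX T (D : Set X) n (t ^ (-(n : ℝ))) x := by
  intro x t ht
  have hR : IsQrayInverse T D ω t (R t) := ⟨hRdom t ht, hQR t ht, hRQ t ht⟩
  rw [Real.rpow_neg ht.le, Real.rpow_natCast]
  refine le_mul_KX D.zero_mem (by positivity) fun a b hab hb => ?_
  calc psi T R n x t ≤ psi T R n a t + psi T R n b t := hab ▸ psi_add_le ht.le n a b
    _ ≤ 2 * (1 + 3 * M) ^ ((n + 1) / 2) * ‖a‖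
          + 2 * (1 + 3 * M) ^ ((n + 1) / 2) * ((t ^ n)⁻¹ * ‖(T ^ n) b‖) :=
        add_le_add (psi_le_norm ht hM hR (hR1 t ht) (hR2 t ht) n a)
          (psi_le_of_mem_domN ht hM hR (hR1 t ht) (hR2 t ht) hb)
    _ ≤ 2 * (1 + 3 * M) ^ ((n + 1) / 2) * (‖a‖ + (t ^ n)⁻¹ * (‖b‖ + ‖(T ^ n) b‖)) := by
        rw [mul_add]
        gcongr
        exact le_add_of_nonneg_left (norm_nonneg b)

/-- the lower bound `ψ_x(t) ≤ 2 (1+3M)^{⌈n/2⌉} K(t^{-n},x)` for `t > 0`,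
where `K` is the `K`-functional of the couple `X, D(Tⁿ)`. -/
theorem psi_le_K
    {X : Type*} [NormedAddCommGroup X] [NormedSpace ℝ X] [CompleteSpace X]
    [Module ℍᵐᵒᵖ X] [SMulCommClass ℍᵐᵒᵖ ℝ X]
    -- right Banach space: `‖x·s‖ = ‖x‖·|s|`
    (hnorm : ∀ (x : X) (s : ℍ), ‖(op s) • x‖ = ‖x‖ * ‖s‖)
    -- `T` is a closed right linear operator with domain `D`
    (T : Module.End ℍᵐᵒᵖ X) (D : Submodule ℍᵐᵒᵖ X)
    (hclosed : IsClosed {p : X × X | p.1 ∈ (D : Set X) ∧ T p.1 = p.2})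
    -- the ray `S_ω` lies in the S-resolvent set, with pseudo-resolvents `R t = Q_{te^{iω}}(T)⁻¹`
    (ω : ℝ) (hω : ω ∈ Set.Icc (0:ℝ) Real.pi)
    (M : ℝ) (hM : 0 ≤ M)
    (R : ℝ → Module.End ℍᵐᵒᵖ X)
    (hRcont : ∀ t > 0, Continuous (R t))
    (hRdom : ∀ t > 0, ∀ x : X, R t x ∈ domN T (D : Set X) 2)
    (hQR : ∀ t > 0, ∀ x : X, Qray T ω t (R t x) = x)
    (hRQ : ∀ t > 0, ∀ x ∈ domN T (D : Set X) 2, R t (Qray T ω t x) = x)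
    -- the resolvent bounds `‖Q_s⁻¹‖ ≤ M/|s|²` and `‖T Q_s⁻¹‖ ≤ M/|s|` on `S_ω`
    (hR1 : ∀ t > 0, ∀ x : X, ‖R t x‖ ≤ M / t ^ 2 * ‖x‖)
    (hR2 : ∀ t > 0, ∀ x : X, ‖T (R t x)‖ ≤ M / t * ‖x‖)
    (n : ℕ) (hn : 0 < n) :
    ∀ x : X, ∀ t > (0:ℝ),
      psi T R n x t ≤ 2 * (1 + 3 * M) ^ ((n + 1) / 2) * KX T (D : Set X) n (t ^ (-(n : ℝ))) x :=
  psi_le_K_general T D ω M hM R hRdom hQR hRQ hR1 hR2 n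
end
end
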